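/- arXiv:2102.02616 — 3 statements merged into one kernel-verified Lean document; each statement's English description precedes it below -/
import Mathlib

section
/- Let ψ : ℝ → ℝ be twice continuously differentiable with ψ(s) ≥ −Λ and ψ''(s) ≥ −Λ for all s ∈ ℝ for some constant Λ ≥ 0, and suppose ψ''(t) → +∞ as t → +∞ and as t → −∞. Then there exists a sequence of twice continuously differentiable functions f_n : ℝ → ℝ and constants C_n ≥ 0 such that: (i) f_n → ψ and f_n' → ψ' uniformly on every compact subset of ℝ; (ii) −Λ ≤ f_n(s) ≤ ψ(s) for all s ∈ ℝ; (iii) f_n''(s) ≥ −Λ for all s ∈ ℝ; and (iv) |f_n''(s)| ≤ C_n for all s ∈ ℝ. -/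
/-!
Cap ψ'' at a level d ≥ 0 that dominates it on an interval [a, b] ∋ 0, i.e. take the function with
second derivative min ψ'' d and the same value and slope as ψ at 0. It agrees with ψ to first order
on [a, b], and it lies below ψ because their difference is convex with a double zero at 0. Since
ψ'' → ∞ at ±∞, ψ' is eventually nonnegative to the right and nonpositive to the left; if [a, b]
reaches past those points, the capped function is convex outside [a, b] and leaves [a, b] with the
slope of ψ, hence stays above min ψ ≥ -Λ. Letting [a, b] exhaust ℝ gives the sequence.
-/

open Filter Set

theorem tendstoUniformlyOn_of_eventually_eqOn {ι α β : Type*} [UniformSpace β]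
    {F : ι → α → β} {f : α → β} {p : Filter ι} {s : Set α}
    (h : ∀ᶠ n in p, EqOn (F n) f s) : TendstoUniformlyOn F f p s :=
  fun _ hu => h.mono fun _ hn x hx => by rw [hn hx]; exact refl_mem_uniformity hu

theorem IsCompact.eventually_subset_Icc {ι : Type*} {p : Filter ι} {K : Set ℝ} (hK : IsCompact K)
    {a b : ι → ℝ} (ha : Tendsto a p atBot) (hb : Tendsto b p atTop) :
    ∀ᶠ n in p, K ⊆ Icc (a n) (b n) := by
  obtain ⟨l, hl⟩ := hK.bddBelow
  obtain ⟨u, hu⟩ := hK.bddAbove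
  filter_upwards [ha.eventually_le_atBot l, hb.eventually_ge_atTop u] with n han hbn x hx
  exact ⟨han.trans (hl hx), (hu hx).trans hbn⟩

theorem ContDiff.continuous_deriv_deriv {f : ℝ → ℝ} (hf : ContDiff ℝ 2 f) :
    Continuous (deriv (deriv f)) :=
  (hf.iterate_deriv' 0 2).continuous

theorem ConvexOn.add_deriv_mul_sub_le {S : Set ℝ} {f : ℝ → ℝ} {x y : ℝ} (hfc : ConvexOn ℝ S f)
    (hx : x ∈ S) (hy : y ∈ S) (hfd : DifferentiableAt ℝ f x) :
    f x + deriv f x * (y - x) ≤ f y := by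
  rcases lt_trichotomy x y with hxy | rfl | hxy
  · have := hfc.deriv_le_slope hx hy hxy hfd
    rw [slope_def_field, le_div_iff₀ (sub_pos.2 hxy)] at this
    linarith
  · simp
  · have := hfc.slope_le_deriv hy hx hxy hfd
    rw [slope_def_field, div_le_iff₀ (sub_pos.2 hxy)] at this
    linarith

theorem add_deriv_mul_sub_le_of_deriv2_nonneg {S : Set ℝ} {f : ℝ → ℝ} {x y : ℝ} (hS : Convex ℝ S)
    (hf : ContDiff ℝ 2 f) (hf'' : ∀ z ∈ interior S, 0 ≤ deriv (deriv f) z)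
    (hx : x ∈ S) (hy : y ∈ S) : f x + deriv f x * (y - x) ≤ f y :=
  (convexOn_of_deriv2_nonneg hS (hf.continuous.continuousOn)
    (hf.differentiable two_ne_zero).differentiableOn hf.differentiable_deriv_two.differentiableOn
    hf'').add_deriv_mul_sub_le hx hy (hf.differentiable two_ne_zero x)

theorem tendsto_atTop_of_tendsto_deriv_atTop {g : ℝ → ℝ} (hg : Differentiable ℝ g)
    (h : Tendsto (deriv g) atTop atTop) : Tendsto g atTop atTop := by
  obtain ⟨b, hb⟩ := eventually_atTop.1 (h.eventually_ge_atTop 1)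
  have hlin : ∀ s ≥ b, g b + (s - b) ≤ g s := fun s hs => by
    have := (convex_Ici b).mul_sub_le_image_sub_of_le_deriv hg.continuous.continuousOn
      hg.differentiableOn (fun x hx => hb x (interior_subset hx)) b self_mem_Ici s hs hs
    linarith
  refine tendsto_atTop_mono' _ (eventually_ge_atTop b |>.mono hlin) ?_
  exact tendsto_atTop_add_const_left _ _ (tendsto_atTop_add_const_right _ _ tendsto_id)

theorem tendsto_atBot_of_tendsto_deriv_atBot {g : ℝ → ℝ} (hg : Differentiable ℝ g)
    (h : Tendsto (deriv g) atBot atTop) : Tendsto g atBot atBot := by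
  obtain ⟨a, ha⟩ := eventually_atBot.1 (h.eventually_ge_atTop 1)
  have hlin : ∀ s ≤ a, g s ≤ g a + (s - a) := fun s hs => by
    have := (convex_Iic a).mul_sub_le_image_sub_of_le_deriv hg.continuous.continuousOn
      hg.differentiableOn (fun x hx => ha x (mem_Iic.1 (interior_subset hx))) s hs a self_mem_Iic hs
    linarith
  refine tendsto_atBot_mono' _ (eventually_le_atBot a |>.mono hlin) ?_
  exact tendsto_atBot_add_const_left _ _ (tendsto_atBot_add_const_right _ _ tendsto_id)

noncomputable def doublePrimitive (ρ : ℝ → ℝ) (s : ℝ) : ℝ :=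
  ∫ t in (0 : ℝ)..s, ∫ u in (0 : ℝ)..t, ρ u

section doublePrimitive

variable {ρ : ℝ → ℝ}

theorem differentiable_primitive (hρ : Continuous ρ) :
    Differentiable ℝ fun s => ∫ u in (0 : ℝ)..s, ρ u :=
  fun s => (hρ.integral_hasStrictDerivAt 0 s).hasDerivAt.differentiableAt

theorem deriv_primitive (hρ : Continuous ρ) : deriv (fun s => ∫ u in (0 : ℝ)..s, ρ u) = ρ :=
  funext (Continuous.deriv_integral ρ hρ 0)

theorem deriv_doublePrimitive (hρ : Continuous ρ) :
    deriv (doublePrimitive ρ) = fun s => ∫ u in (0 : ℝ)..s, ρ u :=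
  deriv_primitive (differentiable_primitive hρ).continuous

theorem deriv_deriv_doublePrimitive (hρ : Continuous ρ) :
    deriv (deriv (doublePrimitive ρ)) = ρ := by
  rw [deriv_doublePrimitive hρ, deriv_primitive hρ]

theorem contDiff_doublePrimitive (hρ : Continuous ρ) : ContDiff ℝ 2 (doublePrimitive ρ) := by
  rw [show (2 : WithTop ℕ∞) = 1 + 1 from rfl, contDiff_succ_iff_deriv, deriv_doublePrimitive hρ,
    contDiff_one_iff_deriv]
  refine ⟨differentiable_primitive (differentiable_primitive hρ).continuous, by simp,
    differentiable_primitive hρ, ?_⟩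
  rwa [deriv_primitive hρ]

theorem doublePrimitive_nonneg (hρ : Continuous ρ) (hρ0 : 0 ≤ ρ) (s : ℝ) :
    0 ≤ doublePrimitive ρ s := by
  have := add_deriv_mul_sub_le_of_deriv2_nonneg convex_univ (contDiff_doublePrimitive hρ)
    (fun z _ => by rw [deriv_deriv_doublePrimitive hρ]; exact hρ0 z) (mem_univ 0) (mem_univ s)
  simpa [deriv_doublePrimitive hρ, doublePrimitive] using this

theorem integral_eq_zero_of_eqOn_Icc {a b s : ℝ} (h : EqOn ρ 0 (Icc a b)) (h0 : (0 : ℝ) ∈ Icc a b)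
    (hs : s ∈ Icc a b) : ∫ u in (0 : ℝ)..s, ρ u = 0 := by
  rw [intervalIntegral.integral_congr (h.mono (uIcc_subset_Icc h0 hs))]
  simp

theorem doublePrimitive_eqOn_zero {a b : ℝ} (h : EqOn ρ 0 (Icc a b)) (h0 : (0 : ℝ) ∈ Icc a b) :
    EqOn (doublePrimitive ρ) 0 (Icc a b) := fun s hs => by
  rw [doublePrimitive, intervalIntegral.integral_congr (g := fun _ => (0 : ℝ))
    fun t ht => integral_eq_zero_of_eqOn_Icc h h0 (uIcc_subset_Icc h0 hs ht)]
  simp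

end doublePrimitive

noncomputable def secondDerivExcess (ψ : ℝ → ℝ) (d s : ℝ) : ℝ := max (deriv (deriv ψ) s - d) 0

noncomputable def capSecondDeriv (ψ : ℝ → ℝ) (d : ℝ) : ℝ → ℝ :=
  ψ - doublePrimitive (secondDerivExcess ψ d)

section capSecondDeriv

variable {ψ : ℝ → ℝ} {d : ℝ}

theorem continuous_secondDerivExcess (hψ : ContDiff ℝ 2 ψ) : Continuous (secondDerivExcess ψ d) :=
  (hψ.continuous_deriv_deriv.sub continuous_const).max continuous_const

theorem secondDerivExcess_nonneg : 0 ≤ secondDerivExcess ψ d := fun _ => le_max_right _ _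

theorem secondDerivExcess_eqOn_zero {S : Set ℝ} (hd : ∀ s ∈ S, deriv (deriv ψ) s ≤ d) :
    EqOn (secondDerivExcess ψ d) 0 S := fun s hs => max_eq_right (sub_nonpos.2 (hd s hs))

theorem contDiff_capSecondDeriv (hψ : ContDiff ℝ 2 ψ) : ContDiff ℝ 2 (capSecondDeriv ψ d) :=
  hψ.sub (contDiff_doublePrimitive (continuous_secondDerivExcess hψ))

theorem deriv_capSecondDeriv (hψ : ContDiff ℝ 2 ψ) :
    deriv (capSecondDeriv ψ d) = deriv ψ - fun s => ∫ u in (0 : ℝ)..s, secondDerivExcess ψ d u := by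
  have hρ := continuous_secondDerivExcess (d := d) hψ
  ext s
  rw [← deriv_doublePrimitive hρ]
  exact deriv_sub (hψ.differentiable two_ne_zero s)
    ((contDiff_doublePrimitive hρ).differentiable two_ne_zero s)

theorem deriv_deriv_capSecondDeriv (hψ : ContDiff ℝ 2 ψ) (s : ℝ) :
    deriv (deriv (capSecondDeriv ψ d)) s = min (deriv (deriv ψ) s) d := by
  have hρ := continuous_secondDerivExcess (d := d) hψ
  rw [deriv_capSecondDeriv hψ, deriv_sub (hψ.differentiable_deriv_two s)
    (differentiable_primitive hρ s), deriv_primitive hρ, secondDerivExcess]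
  rcases le_total (deriv (deriv ψ) s) d with h | h
  · simp [h]
  · simp [h]

theorem capSecondDeriv_le (hψ : ContDiff ℝ 2 ψ) (s : ℝ) : capSecondDeriv ψ d s ≤ ψ s :=
  sub_le_self _
    (doublePrimitive_nonneg (continuous_secondDerivExcess hψ) secondDerivExcess_nonneg s)

theorem capSecondDeriv_eqOn {a b : ℝ} (h0 : (0 : ℝ) ∈ Icc a b)
    (hd : ∀ s ∈ Icc a b, deriv (deriv ψ) s ≤ d) : EqOn (capSecondDeriv ψ d) ψ (Icc a b) :=
  fun s hs => by
    simp [capSecondDeriv, doublePrimitive_eqOn_zero (secondDerivExcess_eqOn_zero hd) h0 hs]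

theorem deriv_capSecondDeriv_eqOn (hψ : ContDiff ℝ 2 ψ) {a b : ℝ} (h0 : (0 : ℝ) ∈ Icc a b)
    (hd : ∀ s ∈ Icc a b, deriv (deriv ψ) s ≤ d) :
    EqOn (deriv (capSecondDeriv ψ d)) (deriv ψ) (Icc a b) := fun s hs => by
  simp [deriv_capSecondDeriv hψ,
    integral_eq_zero_of_eqOn_Icc (secondDerivExcess_eqOn_zero hd) h0 hs]

end capSecondDeriv

theorem exists_eqOn_Icc_with_bounded_deriv_deriv {ψ : ℝ → ℝ} (hψ : ContDiff ℝ 2 ψ) {m Λ a b : ℝ}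
    (hΛ : 0 ≤ Λ) (hm : ∀ s, m ≤ ψ s) (hψ'' : ∀ s, -Λ ≤ deriv (deriv ψ) s) (ha : a ≤ 0) (hb : 0 ≤ b)
    (hleft : ∀ s ≤ a, deriv ψ s ≤ 0 ∧ 0 ≤ deriv (deriv ψ) s)
    (hright : ∀ s ≥ b, 0 ≤ deriv ψ s ∧ 0 ≤ deriv (deriv ψ) s) :
    ∃ (f : ℝ → ℝ) (C : ℝ), ContDiff ℝ 2 f ∧ EqOn f ψ (Icc a b) ∧
      EqOn (deriv f) (deriv ψ) (Icc a b) ∧ (∀ s, m ≤ f s ∧ f s ≤ ψ s) ∧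
      (∀ s, -Λ ≤ deriv (deriv f) s) ∧ (∀ s, |deriv (deriv f) s| ≤ C) := by
  obtain ⟨M, hM⟩ :=
    isCompact_Icc.bddAbove_image (hψ.continuous_deriv_deriv.continuousOn (s := Icc a b))
  set d := max M 0
  have hd : ∀ s ∈ Icc a b, deriv (deriv ψ) s ≤ d := fun s hs =>
    (hM (mem_image_of_mem _ hs)).trans (le_max_left _ _)
  have h0 : (0 : ℝ) ∈ Icc a b := ⟨ha, hb⟩
  have haI : a ∈ Icc a b := ⟨le_rfl, ha.trans hb⟩
  have hbI : b ∈ Icc a b := ⟨ha.trans hb, le_rfl⟩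
  have hf := contDiff_capSecondDeriv hψ (d := d)
  have hfψ := capSecondDeriv_eqOn h0 hd
  have hf'ψ := deriv_capSecondDeriv_eqOn hψ h0 hd
  have hf'' := deriv_deriv_capSecondDeriv hψ (d := d)
  have hf''_nonneg {s : ℝ} (hs : 0 ≤ deriv (deriv ψ) s) :
      0 ≤ deriv (deriv (capSecondDeriv ψ d)) s := by
    rw [hf'']; exact le_min hs (le_max_right _ _)
  refine ⟨capSecondDeriv ψ d, max d Λ, hf, hfψ, hf'ψ, fun s => ⟨?_, capSecondDeriv_le hψ s⟩,
    fun s => ?_, fun s => ?_⟩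
  · rcases le_total s a with hsa | has
    · have := add_deriv_mul_sub_le_of_deriv2_nonneg (convex_Iic a) hf
        (fun z hz => hf''_nonneg (hleft z (mem_Iic.1 (interior_subset hz))).2) self_mem_Iic hsa
      rw [hfψ haI, hf'ψ haI] at this
      nlinarith [hm a, (hleft a le_rfl).1]
    rcases le_total s b with hsb | hbs
    · rw [hfψ ⟨has, hsb⟩]; exact hm s
    · have := add_deriv_mul_sub_le_of_deriv2_nonneg (convex_Ici b) hf
        (fun z hz => hf''_nonneg (hright z (interior_subset hz)).2) self_mem_Ici hbs
      rw [hfψ hbI, hf'ψ hbI] at this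
      nlinarith [hm b, (hright b le_rfl).1]
  · rw [hf'']
    exact le_min (hψ'' s) (by linarith [le_max_right M 0])
  · rw [hf'', abs_le]
    constructor
    · linarith [le_min (hψ'' s) (by linarith [le_max_right M 0] : -Λ ≤ d), le_max_right d Λ]
    · exact (min_le_right _ _).trans (le_max_left _ _)

theorem stmt_11 (ψ : ℝ → ℝ) (hψ : ContDiff ℝ 2 ψ)
    (Λ : ℝ) (hΛ : 0 ≤ Λ)
    (hψlb : ∀ s : ℝ, ψ s ≥ -Λ)
    (hψ''lb : ∀ s : ℝ, deriv (deriv ψ) s ≥ -Λ)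
    (hψ''top : Filter.Tendsto (deriv (deriv ψ)) Filter.atTop Filter.atTop)
    (hψ''bot : Filter.Tendsto (deriv (deriv ψ)) Filter.atBot Filter.atTop) :
    ∃ (f : ℕ → ℝ → ℝ) (C : ℕ → ℝ),
      (∀ n, ContDiff ℝ 2 (f n)) ∧
      (∀ n, 0 ≤ C n) ∧
      (∀ K : Set ℝ, IsCompact K →
        TendstoUniformlyOn (fun n => f n) ψ Filter.atTop K) ∧
      (∀ K : Set ℝ, IsCompact K →
        TendstoUniformlyOn (fun n => deriv (f n)) (deriv ψ) Filter.atTop K) ∧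
      (∀ n s, -Λ ≤ f n s ∧ f n s ≤ ψ s) ∧
      (∀ n s, deriv (deriv (f n)) s ≥ -Λ) ∧
      (∀ n s, |deriv (deriv (f n)) s| ≤ C n) := by
  obtain ⟨a, hleft⟩ := eventually_atBot.1 <|
    ((tendsto_atBot_of_tendsto_deriv_atBot hψ.differentiable_deriv_two hψ''bot).eventually_le_atBot
      0).and (hψ''bot.eventually_ge_atTop 0)
  obtain ⟨b, hright⟩ := eventually_atTop.1 <|
    ((tendsto_atTop_of_tendsto_deriv_atTop hψ.differentiable_deriv_two hψ''top).eventually_ge_atTop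
      0).and (hψ''top.eventually_ge_atTop 0)
  choose f C hf hfψ hf'ψ hfbd hf''lb hC using fun n : ℕ =>
    exists_eqOn_Icc_with_bounded_deriv_deriv hψ hΛ hψlb hψ''lb
      (a := min a 0 - n) (b := max b 0 + n) (by linarith [min_le_right a 0, n.cast_nonneg (α := ℝ)])
      (by linarith [le_max_right b 0, n.cast_nonneg (α := ℝ)])
      (fun s hs => hleft s (by linarith [min_le_left a 0, n.cast_nonneg (α := ℝ)]))
      (fun s hs => hright s (by linarith [le_max_left b 0, n.cast_nonneg (α := ℝ)]))
  have hexhaust : ∀ K : Set ℝ, IsCompact K →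
      ∀ᶠ n : ℕ in atTop, K ⊆ Icc (min a 0 - n) (max b 0 + n) := fun K hK =>
    hK.eventually_subset_Icc
      (tendsto_atBot_add_const_left _ _ (tendsto_neg_atTop_atBot.comp tendsto_natCast_atTop_atTop))
      (tendsto_atTop_add_const_left _ _ tendsto_natCast_atTop_atTop)
  refine ⟨f, C, hf, fun n => (abs_nonneg _).trans (hC n 0), fun K hK => ?_, fun K hK => ?_,
    hfbd, hf''lb, hC⟩
  · exact tendstoUniformlyOn_of_eventually_eqOn ((hexhaust K hK).mono fun n hn => (hfψ n).mono hn)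
  · exact tendstoUniformlyOn_of_eventually_eqOn ((hexhaust K hK).mono fun n hn => (hf'ψ n).mono hn)
end

section
/- Let A : ℝ^d → ℝ be continuously differentiable with gradient A' satisfying |A'(p)| ≤ C̄_A·|p| for all p, let (X, μ) be a measure space, and let w, v : X → ℝ^d be measurable with ∫ |w|² dμ < ∞ and ∫ |v|² dμ < ∞. Then lim_{δ → 0⁺} (1/δ)·∫_X (A(w(x) + δ·v(x)) − A(w(x))) dμ(x) = ∫_X A'(w(x))·v(x) dμ(x). -/
/-!
The derivative of `t ↦ A (w + t • v)` is `⟪∇A (w + t • v), v⟫`, which the linear growth of the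
gradient bounds by `C (‖w‖ ‖v‖ + ‖v‖²)` for `|t| ≤ 1`. Since `w` and `v` are in `L²`, this bound
is integrable by Hölder's inequality, so we may differentiate under the integral sign at `t = 0`;
the limit of the difference quotients is then the right derivative there.
-/

open MeasureTheory RealInnerProductSpace Filter

section

variable {E : Type*} [NormedAddCommGroup E] [InnerProductSpace ℝ E] [CompleteSpace E]

theorem ContDiff.continuous_gradient {A : E → ℝ} (hA : ContDiff ℝ 1 A) :
    Continuous (gradient A) :=
  (InnerProductSpace.toDual ℝ E).symm.continuous.comp (hA.continuous_fderiv one_ne_zero)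

theorem hasDerivAt_comp_add_smul {A : E → ℝ} {p v : E} {t : ℝ}
    (hA : DifferentiableAt ℝ A (p + t • v)) :
    HasDerivAt (fun s : ℝ => A (p + s • v)) ⟪gradient A (p + t • v), v⟫ t := by
  rw [inner_gradient_left]
  refine hA.hasFDerivAt.comp_hasDerivAt t ?_
  simpa using ((hasDerivAt_id t).smul_const v).const_add p

theorem norm_inner_gradient_add_smul_le {A : E → ℝ} {C : ℝ} (hC : 0 ≤ C)
    (hgrowth : ∀ p, ‖gradient A p‖ ≤ C * ‖p‖) {p v : E} {t : ℝ} (ht : |t| ≤ 1) :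
    ‖⟪gradient A (p + t • v), v⟫‖ ≤ C * (‖p‖ * ‖v‖ + ‖v‖ ^ 2) := by
  have hpv : ‖p + t • v‖ ≤ ‖p‖ + ‖v‖ := calc
    ‖p + t • v‖ ≤ ‖p‖ + |t| * ‖v‖ := by
      simpa [norm_smul] using norm_add_le p (t • v)
    _ ≤ ‖p‖ + ‖v‖ := by gcongr; exact mul_le_of_le_one_left (norm_nonneg v) ht
  calc ‖⟪gradient A (p + t • v), v⟫‖
      ≤ ‖gradient A (p + t • v)‖ * ‖v‖ := norm_inner_le_norm _ _
    _ ≤ C * (‖p‖ + ‖v‖) * ‖v‖ := by gcongr; exact (hgrowth _).trans (by gcongr)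
    _ = C * (‖p‖ * ‖v‖ + ‖v‖ ^ 2) := by ring

variable {X : Type*} [MeasurableSpace X] {μ : Measure X}

theorem hasDerivAt_integral_sub_comp_add_smul {A : E → ℝ} (hA : ContDiff ℝ 1 A) {C : ℝ}
    (hC : 0 ≤ C) (hgrowth : ∀ p, ‖gradient A p‖ ≤ C * ‖p‖) {w v : X → E}
    (hw : MemLp w 2 μ) (hv : MemLp v 2 μ) :
    HasDerivAt (fun t : ℝ => ∫ x, (A (w x + t • v x) - A (w x)) ∂μ)
      (∫ x, ⟪gradient A (w x), v x⟫ ∂μ) 0 := by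
  have hF_meas (t : ℝ) : AEStronglyMeasurable (fun x => A (w x + t • v x) - A (w x)) μ :=
    (hA.continuous.comp_aestronglyMeasurable (hw.1.add (hv.1.const_smul t))).sub
      (hA.continuous.comp_aestronglyMeasurable hw.1)
  have hF'_meas : AEStronglyMeasurable (fun x => ⟪gradient A (w x + (0 : ℝ) • v x), v x⟫) μ :=
    (hA.continuous_gradient.comp_aestronglyMeasurable (hw.1.add (hv.1.const_smul 0))).inner hv.1
  have hbound : Integrable (fun x => C * (‖w x‖ * ‖v x‖ + ‖v x‖ ^ 2)) μ :=
    ((hw.norm.integrable_mul hv.norm).add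
      ((memLp_two_iff_integrable_sq_norm hv.1).1 hv)).const_mul C
  have key := hasDerivAt_integral_of_dominated_loc_of_deriv_le (x₀ := 0)
    (F := fun t x => A (w x + t • v x) - A (w x))
    (F' := fun t x => ⟪gradient A (w x + t • v x), v x⟫)
    (Metric.closedBall_mem_nhds 0 one_pos) (Eventually.of_forall hF_meas) (by simp) hF'_meas
    (Eventually.of_forall fun x t ht =>
      norm_inner_gradient_add_smul_le hC hgrowth (by simpa using ht)) hbound
    (Eventually.of_forall fun x t _ =>
      (hasDerivAt_comp_add_smul (hA.differentiable one_ne_zero _)).sub_const (A (w x)))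
  simpa using key.2

end

theorem stmt_13_general (d : ℕ)
    (A : EuclideanSpace ℝ (Fin d) → ℝ) (hA : ContDiff ℝ 1 A)
    (CbarA : ℝ) (hCbarA : 0 < CbarA)
    (hgrowth : ∀ p : EuclideanSpace ℝ (Fin d), ‖gradient A p‖ ≤ CbarA * ‖p‖)
    {X : Type*} [MeasurableSpace X] (μ : Measure X)
    (w v : X → EuclideanSpace ℝ (Fin d))
    (hw : Measurable w) (hv : Measurable v)
    (hw2 : Integrable (fun x => ‖w x‖ ^ 2) μ)
    (hv2 : Integrable (fun x => ‖v x‖ ^ 2) μ) :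
    Filter.Tendsto
      (fun δ : ℝ => (1 / δ) * ∫ x, (A (w x + δ • v x) - A (w x)) ∂μ)
      (nhdsWithin 0 (Set.Ioi 0))
      (nhds (∫ x, ⟪gradient A (w x), v x⟫ ∂μ)) := by
  have hw' := (memLp_two_iff_integrable_sq_norm hw.aestronglyMeasurable).2 hw2
  have hv' := (memLp_two_iff_integrable_sq_norm hv.aestronglyMeasurable).2 hv2
  have hderiv := hasDerivAt_integral_sub_comp_add_smul hA hCbarA.le hgrowth hw' hv'
  refine hderiv.tendsto_slope_zero_right.congr fun δ => ?_
  simp [one_div]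

theorem stmt_13 (d : ℕ) (hd : 1 ≤ d)
    (A : EuclideanSpace ℝ (Fin d) → ℝ) (hA : ContDiff ℝ 1 A)
    (CbarA : ℝ) (hCbarA : 0 < CbarA)
    (hgrowth : ∀ p : EuclideanSpace ℝ (Fin d), ‖gradient A p‖ ≤ CbarA * ‖p‖)
    {X : Type*} [MeasurableSpace X] (μ : Measure X)
    (w v : X → EuclideanSpace ℝ (Fin d))
    (hw : Measurable w) (hv : Measurable v)
    (hw2 : Integrable (fun x => ‖w x‖ ^ 2) μ)
    (hv2 : Integrable (fun x => ‖v x‖ ^ 2) μ) :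
    Filter.Tendsto
      (fun δ : ℝ => (1 / δ) * ∫ x, (A (w x + δ • v x) - A (w x)) ∂μ)
      (nhdsWithin 0 (Set.Ioi 0))
      (nhds (∫ x, ⟪gradient A (w x), v x⟫ ∂μ)) :=
  stmt_13_general d A hA CbarA hCbarA hgrowth μ w v hw hv hw2 hv2
end

section
/- Let f : ℝ → ℝ be continuously differentiable with |f'(s)| ≤ C·(1 + |s|) for all s ∈ ℝ for some C > 0, let (X, μ) be a finite measure space, and let w, v : X → ℝ be measurable with ∫ w² dμ < ∞ and ∫ v² dμ < ∞. Then lim_{δ → 0⁺} (1/δ)·∫_X (f(w(x) + δ·v(x)) − f(w(x))) dμ(x) = ∫_X f'(w(x))·v(x) dμ(x). -/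
open MeasureTheory Filter Topology Set

/-!
By the mean value theorem and the growth bound on `f'`, for `0 < δ ≤ 1` the difference quotient
`(f (w + δ v) - f w) / δ` is dominated by `C (1 + |w| + |v|) |v|`, which is integrable as a product
of two `L²` functions on a finite measure space. Dominated convergence then passes the pointwise
limit `f' (w) v` under the integral.
-/

theorem HasDerivAt.tendsto_one_div_mul_sub_comp_add_mul {f : ℝ → ℝ} {f' a : ℝ}
    (hf : HasDerivAt f f' a) (b : ℝ) :
    Tendsto (fun δ : ℝ => (1 / δ) * (f (a + δ * b) - f a)) (𝓝[≠] 0) (𝓝 (f' * b)) := by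
  have hline : HasDerivAt (fun δ : ℝ => a + δ * b) b 0 := by
    simpa using ((hasDerivAt_id (0 : ℝ)).mul_const b).const_add a
  have hcomp : HasDerivAt (fun δ : ℝ => f (a + δ * b)) (f' * b) 0 := by
    have hf0 : HasDerivAt f f' (a + 0 * b) := by simpa using hf
    simpa [Function.comp_def] using hf0.comp 0 hline
  simpa [hasDerivAt_iff_tendsto_slope_zero] using hcomp

theorem abs_le_add_abs_of_mem_uIcc {a b δ s : ℝ} (hδ : δ ∈ Icc (0 : ℝ) 1)
    (hs : s ∈ uIcc a (a + δ * b)) : |s| ≤ |a| + |b| := by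
  have hend : |a + δ * b| ≤ |a| + |b| := calc
    |a + δ * b| ≤ |a| + δ * |b| := by
      simpa [abs_mul, abs_of_nonneg hδ.1] using abs_add_le a (δ * b)
    _ ≤ |a| + |b| := by gcongr; exact mul_le_of_le_one_left (abs_nonneg b) hδ.2
  exact abs_le.2 <| uIcc_subset_Icc (abs_le.1 (le_add_of_nonneg_right (abs_nonneg b)))
    (abs_le.1 hend) hs

theorem abs_sub_le_of_abs_deriv_le_linear {f : ℝ → ℝ} (hf : Differentiable ℝ f) {C : ℝ}
    (hgrowth : ∀ s, |deriv f s| ≤ C * (1 + |s|)) (a b : ℝ) {δ : ℝ} (hδ : δ ∈ Icc (0 : ℝ) 1) :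
    |f (a + δ * b) - f a| ≤ C * (1 + |a| + |b|) * (δ * |b|) := by
  have hderiv : ∀ s ∈ uIcc a (a + δ * b), ‖deriv f s‖ ≤ C * (1 + |a| + |b|) := fun s hs => calc
    ‖deriv f s‖ ≤ C * (1 + |s|) := hgrowth s
    _ ≤ C * (1 + |a| + |b|) := by
      have hC : 0 ≤ C := by simpa using (abs_nonneg _).trans (hgrowth 0)
      rw [add_assoc]; gcongr; exact abs_le_add_abs_of_mem_uIcc hδ hs
  simpa [abs_mul, abs_of_nonneg hδ.1] using
    (convex_uIcc a (a + δ * b)).norm_image_sub_le_of_norm_deriv_le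
      (fun s _ => hf s) hderiv left_mem_uIcc right_mem_uIcc

theorem abs_one_div_mul_sub_le_of_abs_deriv_le_linear {f : ℝ → ℝ} (hf : Differentiable ℝ f)
    {C : ℝ} (hgrowth : ∀ s, |deriv f s| ≤ C * (1 + |s|)) (a b : ℝ) {δ : ℝ}
    (hδ : δ ∈ Ioc (0 : ℝ) 1) :
    |(1 / δ) * (f (a + δ * b) - f a)| ≤ C * (1 + |a| + |b|) * |b| := by
  rw [abs_mul, abs_of_pos (one_div_pos.2 hδ.1), one_div_mul_eq_div, div_le_iff₀ hδ.1]
  exact (abs_sub_le_of_abs_deriv_le_linear hf hgrowth a b (Ioc_subset_Icc_self hδ)).trans_eq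
    (by ring)

theorem stmt_15_general (f : ℝ → ℝ) (hf : ContDiff ℝ 1 f)
    (C : ℝ)
    (hgrowth : ∀ s : ℝ, |deriv f s| ≤ C * (1 + |s|))
    {X : Type*} [MeasurableSpace X] (μ : Measure X) [IsFiniteMeasure μ]
    (w v : X → ℝ)
    (hw : Measurable w) (hv : Measurable v)
    (hw2 : Integrable (fun x => (w x) ^ 2) μ)
    (hv2 : Integrable (fun x => (v x) ^ 2) μ) :
    Filter.Tendsto
      (fun δ : ℝ => (1 / δ) * ∫ x, (f (w x + δ * v x) - f (w x)) ∂μ)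
      (nhdsWithin 0 (Set.Ioi 0))
      (nhds (∫ x, deriv f (w x) * v x ∂μ)) := by
  have hfd : Differentiable ℝ f := hf.differentiable one_ne_zero
  have hw' : MemLp w 2 μ := (memLp_two_iff_integrable_sq hw.aestronglyMeasurable).2 hw2
  have hv' : MemLp v 2 μ := (memLp_two_iff_integrable_sq hv.aestronglyMeasurable).2 hv2
  have hbound : Integrable (fun x => C * (1 + |w x| + |v x|) * |v x|) μ :=
    ((((memLp_const (1 : ℝ)).add hw'.abs).add hv'.abs).const_mul C).integrable_mul hv'.abs
  have hquot : Tendsto (fun δ : ℝ => ∫ x, (1 / δ) * (f (w x + δ * v x) - f (w x)) ∂μ)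
      (𝓝[>] 0) (𝓝 (∫ x, deriv f (w x) * v x ∂μ)) :=
    tendsto_integral_filter_of_dominated_convergence _
      (Eventually.of_forall fun δ => by fun_prop)
      (by
        filter_upwards [Ioc_mem_nhdsGT one_pos] with δ hδ
        exact Eventually.of_forall fun x =>
          abs_one_div_mul_sub_le_of_abs_deriv_le_linear hfd hgrowth (w x) (v x) hδ)
      hbound
      (Eventually.of_forall fun x =>
        ((hfd (w x)).hasDerivAt.tendsto_one_div_mul_sub_comp_add_mul (v x)).mono_left
          (nhdsWithin_mono _ fun _ h => ne_of_gt h))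
  simpa only [integral_const_mul] using hquot

theorem stmt_15 (f : ℝ → ℝ) (hf : ContDiff ℝ 1 f)
    (C : ℝ) (hC : 0 < C)
    (hgrowth : ∀ s : ℝ, |deriv f s| ≤ C * (1 + |s|))
    {X : Type*} [MeasurableSpace X] (μ : Measure X) [IsFiniteMeasure μ]
    (w v : X → ℝ)
    (hw : Measurable w) (hv : Measurable v)
    (hw2 : Integrable (fun x => (w x) ^ 2) μ)
    (hv2 : Integrable (fun x => (v x) ^ 2) μ) :
    Filter.Tendsto
      (fun δ : ℝ => (1 / δ) * ∫ x, (f (w x + δ * v x) - f (w x)) ∂μ)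
      (nhdsWithin 0 (Set.Ioi 0))
      (nhds (∫ x, deriv f (w x) * v x ∂μ)) :=
  stmt_15_general f hf C hgrowth μ w v hw hv hw2 hv2
end
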